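/- For μ > 0 and a nonnegative integer l₁, with l = 2l₁ + 1, one has ∫_ℂ e^{-μ|z|²} ∫₀^{2π} ∫₀^u {e^{is}z + e^{-is}z̄, (e^{iu}z + e^{-iu}z̄)^l} ds du dz dz̄ = -2π² l! / (l₁! μ^{l₁+1}), where {f,g} denotes the Poisson bracket, equal in complex coordinates to Im(∂f/∂z · ∂g/∂z̄), and dz dz̄ denotes Lebesgue measure on ℂ ≅ ℝ². -/

import Mathlib

open scoped Real

/-- The Wirtinger derivative `∂f/∂z = (1/2)(∂_x - i ∂_p) f` of `f : ℂ → ℂ`. -/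
noncomputable def wirtZ (f : ℂ → ℂ) (z : ℂ) : ℂ :=
  (1 / 2) * ((fderiv ℝ f z) 1 - Complex.I * (fderiv ℝ f z) Complex.I)

/-- The Wirtinger derivative `∂f/∂z̄ = (1/2)(∂_x + i ∂_p) f` of `f : ℂ → ℂ`. -/
noncomputable def wirtZbar (f : ℂ → ℂ) (z : ℂ) : ℂ :=
  (1 / 2) * ((fderiv ℝ f z) 1 + Complex.I * (fderiv ℝ f z) Complex.I)

/-- The Poisson bracket in complex coordinates, `{f,g} = Im(∂f/∂z · ∂g/∂z̄)`. -/
noncomputable def PB (f g : ℂ → ℂ) (z : ℂ) : ℝ :=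
  (wirtZ f z * wirtZbar g z).im

/-!
Write `x_u(z) = e^{iu}z + e^{-iu}z̄ = 2 Re(e^{iu}z)`. Both Wirtinger derivatives of a linear
symbol are constant, so `{x_s, x_u^l} = l x_u^{l-1} sin(s - u)` and the `s`-integral equals
`l (cos u - 1) x_u^{l-1}`. As `l - 1 = 2l₁` is even, `u ↦ cos u · x_u^{2l₁}` is antiperiodic
with antiperiod `π`, so it integrates to zero over a period, while in the binomial expansion
of `x_u^{2l₁}` only the frequency-zero term survives the `u`-integral, leaving
`2π C(2l₁, l₁) |z|^{2l₁}`. What remains is the Gaussian moment `π l₁! / μ^{l₁+1}`, and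
`l C(2l₁, l₁) l₁!² = l!`.
-/

open Complex ComplexConjugate
open scoped Nat

section Wirtinger

variable {f : ℂ → ℂ} {z : ℂ}

lemma wirtZ_of_hasFDerivAt_add_conj {a b : ℂ}
    (hf : HasFDerivAt f
      (a • ContinuousLinearMap.id ℝ ℂ + b • conjCLE.toContinuousLinearMap) z) :
    wirtZ f z = a := by
  simp only [wirtZ, hf.fderiv, FunLike.coe_add, Pi.add_apply, FunLike.coe_smul,
    Pi.smul_apply, ContinuousLinearMap.id_apply, ContinuousLinearEquiv.coe_coe, conjCLE_apply,
    smul_eq_mul, map_one, conj_I]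
  linear_combination (b - a) / 2 * I_sq

lemma wirtZbar_of_hasFDerivAt_add_conj {a b : ℂ}
    (hf : HasFDerivAt f
      (a • ContinuousLinearMap.id ℝ ℂ + b • conjCLE.toContinuousLinearMap) z) :
    wirtZbar f z = b := by
  simp only [wirtZbar, hf.fderiv, FunLike.coe_add, Pi.add_apply, FunLike.coe_smul,
    Pi.smul_apply, ContinuousLinearMap.id_apply, ContinuousLinearEquiv.coe_coe, conjCLE_apply,
    smul_eq_mul, map_one, conj_I]
  linear_combination (a - b) / 2 * I_sq

lemma hasFDerivAt_mul_add_mul_conj (a b z : ℂ) :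
    HasFDerivAt (fun w => a * w + b * conj w)
      (a • ContinuousLinearMap.id ℝ ℂ + b • conjCLE.toContinuousLinearMap) z :=
  ((hasFDerivAt_id z).const_mul a).add (conjCLE.toContinuousLinearMap.hasFDerivAt.const_mul b)

lemma wirtZbar_pow (hf : DifferentiableAt ℝ f z) (n : ℕ) :
    wirtZbar (fun w => f w ^ n) z = n * f z ^ (n - 1) * wirtZbar f z := by
  simp only [wirtZbar, fderiv_fun_pow n hf, FunLike.coe_smul, Pi.smul_apply, nsmul_eq_mul,
    smul_eq_mul]
  ring

lemma PB_mul_add_mul_conj_pow (a b c d z : ℂ) (n : ℕ) :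
    PB (fun w => a * w + b * conj w) (fun w => (c * w + d * conj w) ^ n) z
      = (a * (n * (c * z + d * conj z) ^ (n - 1) * d)).im := by
  rw [PB, wirtZ_of_hasFDerivAt_add_conj (hasFDerivAt_mul_add_mul_conj a b z),
    wirtZbar_pow (hasFDerivAt_mul_add_mul_conj c d z).differentiableAt,
    wirtZbar_of_hasFDerivAt_add_conj (hasFDerivAt_mul_add_mul_conj c d z)]

end Wirtinger

theorem Function.Antiperiodic.intervalIntegral_eq_zero {E : Type*} [NormedAddCommGroup E]
    [NormedSpace ℝ E] {f : ℝ → E} {c : ℝ} (hf : Antiperiodic f c) (t : ℝ) :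
    ∫ x in t..t + 2 * c, f x = 0 := by
  have hshift : ∫ x in t..t + 2 * c, f (x + c) = -∫ x in t..t + 2 * c, f x := by
    simp only [hf _, intervalIntegral.integral_neg]
  rw [intervalIntegral.integral_comp_add_right,
    show t + 2 * c + c = t + c + 2 * c by ring,
    hf.periodic_two_mul.intervalIntegral_add_eq (t + c) t] at hshift
  have := IsAddTorsionFree.of_isTorsionFree ℝ E
  exact self_eq_neg.mp hshift

lemma exp_mul_add_exp_neg_mul_conj (u : ℝ) (z : ℂ) :
    exp (I * u) * z + exp (-(I * u)) * conj z = ((2 * (exp (I * u) * z).re : ℝ) : ℂ) := by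
  rw [show exp (-(I * u)) = conj (exp (I * u)) by rw [← exp_conj]; simp, ← map_mul, add_conj]

lemma integral_sin_sub_right (u : ℝ) :
    ∫ s in (0 : ℝ)..u, Real.sin (s - u) = Real.cos u - 1 := by
  simp [intervalIntegral.integral_comp_sub_right (fun t => Real.sin t) u]

lemma PB_exp_mul_add_exp_neg_mul_conj_pow (s u : ℝ) (z : ℂ) (n : ℕ) :
    PB (fun w => exp (I * s) * w + exp (-(I * s)) * conj w)
        (fun w => (exp (I * u) * w + exp (-(I * u)) * conj w) ^ n) z
      = n * (2 * (exp (I * u) * z).re) ^ (n - 1) * Real.sin (s - u) := by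
  have hphase : exp (I * s) * exp (-(I * u)) = exp (↑(s - u) * I) := by
    rw [← Complex.exp_add]; push_cast; ring_nf
  rw [PB_mul_add_mul_conj_pow, exp_mul_add_exp_neg_mul_conj,
    show exp (I * s) * (n * ((2 * (exp (I * u) * z).re : ℝ) : ℂ) ^ (n - 1) * exp (-(I * u)))
      = ((n * (2 * (exp (I * u) * z).re) ^ (n - 1) : ℝ) : ℂ) * exp (↑(s - u) * I) by
        rw [← hphase]; push_cast; ring,
    im_ofReal_mul, exp_ofReal_mul_I_im]

lemma integral_exp_int_mul_I (m : ℤ) :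
    ∫ u in (0 : ℝ)..2 * π, exp (m * (I * u)) = if m = 0 then (2 * π : ℂ) else 0 := by
  split_ifs with hm
  · simp [hm]
  have hc : (m : ℂ) * I ≠ 0 := by simp [hm]
  simp_rw [← mul_assoc]
  rw [integral_exp_mul_complex hc, show (m : ℂ) * I * ((2 * π : ℝ) : ℂ) = m * (2 * π * I) by
    push_cast; ring, exp_int_mul_two_pi_mul_I]
  simp

lemma integral_exp_mul_add_exp_neg_mul_conj_pow (z : ℂ) (l : ℕ) :
    ∫ u in (0 : ℝ)..2 * π, (exp (I * u) * z + exp (-(I * u)) * conj z) ^ (2 * l)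
      = 2 * π * l.centralBinom * (z * conj z) ^ l := by
  have hexpand : ∀ u : ℝ, (exp (I * u) * z + exp (-(I * u)) * conj z) ^ (2 * l)
      = ∑ k ∈ Finset.range (2 * l + 1), z ^ k * conj z ^ (2 * l - k) * ((2 * l).choose k : ℂ)
          * exp (((2 * k - 2 * l : ℤ) : ℂ) * (I * u)) := by
    intro u
    rw [add_pow]
    refine Finset.sum_congr rfl fun k hk => ?_
    have hkl : k ≤ 2 * l := Nat.lt_succ_iff.mp (Finset.mem_range.mp hk)
    rw [mul_pow, mul_pow, ← exp_nat_mul, ← exp_nat_mul,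
      show ((2 * k - 2 * l : ℤ) : ℂ) * (I * u) = k * (I * u) + ↑(2 * l - k) * -(I * u) by
        push_cast [Nat.cast_sub hkl]; ring, Complex.exp_add]
    ring
  simp_rw [hexpand]
  rw [intervalIntegral.integral_finsetSum fun k _ => by
    apply Continuous.intervalIntegrable; fun_prop]
  simp_rw [intervalIntegral.integral_const_mul, integral_exp_int_mul_I]
  rw [Finset.sum_eq_single l (fun k _ hk => by rw [if_neg (by omega), mul_zero])
    (fun h => absurd (Finset.mem_range.mpr (by omega)) h)]
  rw [if_pos (by omega), show 2 * l - l = l by omega, ← Nat.centralBinom_eq_two_mul_choose]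
  ring

lemma integral_two_re_exp_mul_pow (z : ℂ) (l : ℕ) :
    ∫ u in (0 : ℝ)..2 * π, (2 * (exp (I * u) * z).re) ^ (2 * l)
      = 2 * π * l.centralBinom * ‖z‖ ^ (2 * l) := by
  apply ofReal_injective
  rw [← intervalIntegral.integral_ofReal]
  simp_rw [ofReal_pow, ← exp_mul_add_exp_neg_mul_conj,
    integral_exp_mul_add_exp_neg_mul_conj_pow, mul_conj, normSq_eq_norm_sq]
  push_cast
  rw [pow_mul]

lemma integral_cos_mul_two_re_exp_mul_pow (z : ℂ) (l : ℕ) :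
    ∫ u in (0 : ℝ)..2 * π, Real.cos u * (2 * (exp (I * u) * z).re) ^ (2 * l) = 0 := by
  have hanti : Function.Antiperiodic
      (fun u : ℝ => Real.cos u * (2 * (exp (I * u) * z).re) ^ (2 * l)) π := by
    intro u
    simp only [Real.cos_add_pi, ofReal_add, mul_add, Complex.exp_add, mul_comm I (π : ℂ),
      exp_pi_mul_I]
    simp only [mul_neg, mul_one, neg_mul, neg_re, pow_mul, neg_sq]
  simpa using hanti.intervalIntegral_eq_zero 0

lemma integral_integral_PB_exp_mul_add_exp_neg_mul_conj_pow (z : ℂ) (l : ℕ) :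
    ∫ u in (0 : ℝ)..2 * π, ∫ s in (0 : ℝ)..u,
        PB (fun w => exp (I * s) * w + exp (-(I * s)) * conj w)
          (fun w => (exp (I * u) * w + exp (-(I * u)) * conj w) ^ (2 * l + 1)) z
      = -(2 * π * (2 * l + 1) * l.centralBinom) * ‖z‖ ^ (2 * l) := by
  have hinner : ∀ u : ℝ, ∫ s in (0 : ℝ)..u,
        PB (fun w => exp (I * s) * w + exp (-(I * s)) * conj w)
          (fun w => (exp (I * u) * w + exp (-(I * u)) * conj w) ^ (2 * l + 1)) z
      = (2 * l + 1) * (Real.cos u * (2 * (exp (I * u) * z).re) ^ (2 * l)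
          - (2 * (exp (I * u) * z).re) ^ (2 * l)) := by
    intro u
    simp_rw [PB_exp_mul_add_exp_neg_mul_conj_pow, Nat.add_sub_cancel,
      intervalIntegral.integral_const_mul, integral_sin_sub_right]
    push_cast
    ring
  simp_rw [hinner]
  rw [intervalIntegral.integral_const_mul, intervalIntegral.integral_sub
    (Continuous.intervalIntegrable (by fun_prop) _ _)
    (Continuous.intervalIntegrable (by fun_prop) _ _), integral_cos_mul_two_re_exp_mul_pow,
    integral_two_re_exp_mul_pow]
  ring

lemma integral_norm_pow_mul_exp_neg_mul_sq {μ : ℝ} (hμ : 0 < μ) (m : ℕ) :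
    ∫ z : ℂ, ‖z‖ ^ (2 * m) * Real.exp (-μ * ‖z‖ ^ 2) = π * m ! / μ ^ (m + 1) := by
  have h := Complex.integral_rpow_mul_exp_neg_mul_rpow (p := 2) (q := 2 * m) one_le_two
    (by linarith [m.cast_nonneg (α := ℝ)]) hμ
  simp only [← Real.rpow_natCast, Nat.cast_mul, Nat.cast_ofNat]
  rw [h, show (2 * m + 2 : ℝ) / 2 = m + 1 by ring, Real.Gamma_nat_eq_factorial,
    show -(2 * m + 2 : ℝ) / 2 = -(m + 1 : ℕ) by push_cast; ring, Real.rpow_neg hμ.le]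
  ring

theorem Nat.centralBinom_mul_factorial_mul_factorial (n : ℕ) :
    n.centralBinom * n ! * n ! = (2 * n)! := by
  rw [Nat.centralBinom_eq_two_mul_choose, ← Nat.choose_mul_factorial_mul_factorial
    (show n ≤ 2 * n by omega), show 2 * n - n = n by omega]

/-- For `μ > 0` and `l = 2l₁ + 1` odd,
`∫_ℂ e^{-μ|z|²} ∫₀^{2π} ∫₀^u {e^{is}z + e^{-is}z̄, (e^{iu}z + e^{-iu}z̄)^l} ds du dz dz̄
  = -2π² l! / (l₁! μ^{l₁+1})`. -/
theorem odd_potential_bracket_integral (μ : ℝ) (hμ : 0 < μ) (l₁ : ℕ) :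
    (∫ z : ℂ, Real.exp (-μ * ‖z‖ ^ 2) *
      ∫ u in (0:ℝ)..(2 * Real.pi), ∫ s in (0:ℝ)..u,
        PB (fun w => Complex.exp (Complex.I * s) * w
              + Complex.exp (-(Complex.I * s)) * (starRingEnd ℂ) w)
           (fun w => (Complex.exp (Complex.I * u) * w
              + Complex.exp (-(Complex.I * u)) * (starRingEnd ℂ) w) ^ (2 * l₁ + 1)) z)
      = -(2 * Real.pi ^ 2 * ((2 * l₁ + 1).factorial : ℝ))
          / ((l₁.factorial : ℝ) * μ ^ (l₁ + 1)) := by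
  simp_rw [integral_integral_PB_exp_mul_add_exp_neg_mul_conj_pow, mul_comm (Real.exp _),
    mul_assoc, MeasureTheory.integral_const_mul, integral_norm_pow_mul_exp_neg_mul_sq hμ,
    Nat.factorial_succ, ← Nat.centralBinom_mul_factorial_mul_factorial]
  push_cast
  field_simp
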